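/- Let S be a finite left regular band with identity, k a field, w = Σ_{t∈S} w_t t ∈ kS, and λ_X = Σ_{σ(t)≥X} w_t for X in the lattice L of principal left ideals. If X > Y implies λ_X ≠ λ_Y, then the minimal polynomial of w (as an element of the finite-dimensional algebra kS, or equivalently of left multiplication by w) splits over k with distinct roots; consequently the subalgebra k[w] is split semisimple (isomorphic to a finite product of copies of k). -/

import Mathlib

/-!
For `s ∈ S` one has `s (w - λ_s) = ∑_{st ≠ s} c_t • st`, and each `st ≠ s` generates a strictly
smaller left ideal. By well-founded induction on `Ss`, `s` annihilates `∏_{v ∈ V} (w - v)` as soon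
as `V` contains every `λ_r` with `Sr ⊆ Ss`; since `λ_r ≠ λ_s` for `Sr ⊂ Ss`, the factor `w - λ_s`
is needed only once. Taking `s = 1`, `w` is a root of a product of distinct linear factors, hence
so is its minimal polynomial, and `k[w] ≅ k[X] ⧸ (minpoly) ≅ kⁿ` by Lagrange interpolation.
-/

/-- The principal left ideal `Ss = {u * s : u ∈ S}` generated by `s`. -/
def leftIdeal {S : Type*} [Monoid S] (s : S) : Set S := {x | ∃ u, x = u * s}

open Polynomial

section LeftRegularBand

variable {S : Type*} [Monoid S]

theorem mem_leftIdeal_self (s : S) : s ∈ leftIdeal s := ⟨1, (one_mul s).symm⟩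

theorem leftIdeal_subset_iff {r s : S} : leftIdeal r ⊆ leftIdeal s ↔ r ∈ leftIdeal s :=
  ⟨fun h => h (mem_leftIdeal_self r), by
    rintro ⟨u, rfl⟩ x ⟨v, rfl⟩
    exact ⟨v * u, (mul_assoc v u s).symm⟩⟩

theorem mul_eq_left_iff_leftIdeal_subset (idem : ∀ x : S, x * x = x) {s t : S} :
    s * t = s ↔ leftIdeal s ⊆ leftIdeal t := by
  rw [leftIdeal_subset_iff]
  constructor
  · intro h
    exact ⟨s, h.symm⟩
  · rintro ⟨u, rfl⟩
    rw [mul_assoc, idem]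

theorem leftIdeal_mul_ssubset (idem : ∀ x : S, x * x = x) (lrb : ∀ x y : S, x * y * x = x * y)
    {s t : S} (h : s * t ≠ s) : leftIdeal (s * t) ⊂ leftIdeal s := by
  refine ⟨leftIdeal_subset_iff.mpr ⟨s * t, (lrb s t).symm⟩, fun hsub => h ?_⟩
  rw [← mul_eq_left_iff_leftIdeal_subset idem] at hsub
  rwa [← mul_assoc, idem] at hsub

end LeftRegularBand

section MonoidAlgebra

open MonoidAlgebra

variable {S k : Type*} [Monoid S] [Fintype S] [CommRing k]

open Classical in
theorem single_one_mul_sum_single (s : S) (c : S → k) :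
    single s 1 * ∑ t, single t (c t) =
      single s (∑ t ∈ Finset.univ.filter (fun t => s * t = s), c t) +
        ∑ t ∈ Finset.univ.filter (fun t => s * t ≠ s), single (s * t) (c t) := by
  simp only [Finset.mul_sum, single_mul_single, one_mul]
  rw [← Finset.sum_filter_add_sum_filter_not _ (fun t => s * t = s)]
  congr 1
  refine (Finset.sum_congr rfl fun t ht => ?_).trans (map_sum (singleAddHom s) c _).symm
  rw [(Finset.mem_filter.mp ht).2]
  rfl

open Classical in
theorem single_one_mul_aeval_prod_X_sub_C_eq_zero
    (idem : ∀ x : S, x * x = x) (lrb : ∀ x y : S, x * y * x = x * y) (c lam : S → k)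
    (hlam : ∀ x : S,
      lam x = ∑ t ∈ Finset.univ.filter (fun t : S => leftIdeal x ⊆ leftIdeal t), c t)
    (hdist : ∀ x y : S, leftIdeal y ⊂ leftIdeal x → lam x ≠ lam y)
    (s : S) (V : Finset k) (hV : ∀ r, leftIdeal r ⊆ leftIdeal s → lam r ∈ V) :
    single s 1 * aeval (∑ t, single t (c t)) (∏ v ∈ V, (X - C v)) = 0 := by
  have wf : WellFounded fun a b : S => leftIdeal a ⊂ leftIdeal b :=
    InvImage.wf leftIdeal wellFounded_lt
  induction s using wf.induction generalizing V with
  | _ s ih =>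
  have hlam_s : lam s = ∑ t ∈ Finset.univ.filter (fun t => s * t = s), c t := by
    rw [hlam]
    exact Finset.sum_congr (Finset.filter_congr fun t _ =>
      (mul_eq_left_iff_leftIdeal_subset idem).symm) fun _ _ => rfl
  have hstep : single s (1 : k) * (∑ t, single t (c t) - algebraMap k _ (lam s)) =
      ∑ t ∈ Finset.univ.filter (fun t => s * t ≠ s), c t • single (s * t) 1 := by
    rw [mul_sub, single_one_mul_sum_single, ← hlam_s, Algebra.algebraMap_eq_smul_one,
      mul_smul_comm, mul_one, smul_single, smul_eq_mul, mul_one, add_sub_cancel_left]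
    exact Finset.sum_congr rfl fun t _ => by rw [smul_single, smul_eq_mul, mul_one]
  rw [← Finset.mul_prod_erase V _ (hV s subset_rfl), map_mul, ← mul_assoc, map_sub,
    aeval_X, aeval_C, hstep, Finset.sum_mul]
  refine Finset.sum_eq_zero fun t ht => ?_
  have hlt : leftIdeal (s * t) ⊂ leftIdeal s :=
    leftIdeal_mul_ssubset idem lrb (Finset.mem_filter.mp ht).2
  rw [smul_mul_assoc, ih (s * t) hlt, smul_zero]
  intro r hr
  exact Finset.mem_erase.mpr ⟨(hdist s r (hr.trans_ssubset hlt)).symm, hV r (hr.trans hlt.1)⟩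

end MonoidAlgebra

theorem Polynomial.exists_eq_prod_X_sub_C_of_dvd {k : Type*} [Field k] {p : k[X]} (hp : p.Monic)
    {V : Finset k} (hdvd : p ∣ ∏ v ∈ V, (X - C v)) : ∃ T : Finset k, p = ∏ v ∈ T, (X - C v) := by
  have hsplits : p.Splits :=
    (Splits.prod fun v _ => Splits.X_sub_C v).of_dvd (Monic.ne_zero (monic_prod_of_monic _ _
      fun v _ => monic_X_sub_C v)) hdvd
  have hsep : p.Separable :=
    (separable_prod_X_sub_C_iff' (f := id).mpr fun _ _ _ _ h => h).of_dvd hdvd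
  exact ⟨⟨p.roots, nodup_roots hsep⟩, hsplits.eq_prod_roots_of_monic hp⟩

theorem Polynomial.prod_X_sub_C_dvd_iff {k : Type*} [Field k] (T : Finset k) (q : k[X]) :
    ∏ v ∈ T, (X - C v) ∣ q ↔ ∀ v ∈ T, q.IsRoot v := by
  constructor
  · rintro ⟨r, rfl⟩ v hv
    simp [eval_prod, Finset.prod_eq_zero hv]
  · intro hq
    rcases eq_or_ne q 0 with rfl | hq0
    · exact dvd_zero _
    rw [Finset.prod_eq_multiset_prod, Multiset.prod_X_sub_C_dvd_iff_le_roots hq0,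
      Multiset.le_iff_subset T.nodup]
    exact fun v hv => (mem_roots hq0).mpr (hq v hv)

noncomputable def Polynomial.quotientSpanProdXSubCAlgEquiv {k : Type*} [Field k] (T : Finset k) :
    (k[X] ⧸ Ideal.span {∏ v ∈ T, (X - C v)}) ≃ₐ[k] (T → k) :=
  let evalAt : k[X] →ₐ[k] (T → k) := AlgHom.pi fun v => aeval (v : k)
  have hsurj : Function.Surjective evalAt := fun f => by
    obtain ⟨q, hq⟩ := (exists_eval_eq_iff (fun v : T => (v : k)) f).mpr
      fun _ _ h => congrArg f (Subtype.ext h)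
    exact ⟨q, _root_.funext fun v => by simpa [evalAt] using hq v⟩
  have hker : Ideal.span {∏ v ∈ T, (X - C v)} = RingHom.ker evalAt := by
    ext q
    simp [Ideal.mem_span_singleton, prod_X_sub_C_dvd_iff, funext_iff, evalAt]
  (Ideal.quotientEquivAlgOfEq k hker).trans (Ideal.quotientKerAlgEquivOfSurjective hsurj)

theorem nonempty_adjoin_singleton_algEquiv_pi {k A : Type*} [Field k] [Ring A] [Algebra k A]
    {a : A} {T : Finset k} (hT : minpoly k a = ∏ v ∈ T, (X - C v)) :
    Nonempty (Algebra.adjoin k {a} ≃ₐ[k] (Fin T.card → k)) := by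
  have hker : RingHom.ker (aeval (R := k) a) = Ideal.span {∏ v ∈ T, (X - C v)} := by
    rw [minpoly.ker_aeval_eq_span_minpoly, hT]
  exact ⟨(Subalgebra.equivOfEq _ _ (Algebra.adjoin_singleton_eq_range_aeval k a)).trans <|
    (Ideal.quotientKerEquivRange _).symm.trans <| (Ideal.quotientEquivAlgOfEq k hker).trans <|
      (quotientSpanProdXSubCAlgEquiv T).trans <| AlgEquiv.piCongrLeft' k (fun _ => k) T.equivFin⟩

open Classical in
theorem stmt_6 {S : Type*} [Monoid S] [Fintype S]
    (idem : ∀ x : S, x * x = x) (lrb : ∀ x y : S, x * y * x = x * y)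
    (k : Type*) [Field k] (c : S → k)
    (w : MonoidAlgebra k S) (hw : w = ∑ t : S, MonoidAlgebra.single t (c t))
    (lam : S → k)
    (hlam : ∀ x : S,
      lam x = ∑ t ∈ Finset.univ.filter (fun t : S => leftIdeal x ⊆ leftIdeal t), c t)
    (hdist : ∀ x y : S, leftIdeal y ⊂ leftIdeal x → lam x ≠ lam y) :
    (minpoly k w).Splits ∧ (minpoly k w).roots.Nodup ∧
      ∃ n : ℕ, Nonempty
        ((Algebra.adjoin k ({w} : Set (MonoidAlgebra k S))) ≃ₐ[k] (Fin n → k)) := by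
  have hroot : aeval w (∏ v ∈ Finset.univ.image lam, (X - C v)) = 0 := by
    simpa only [hw, ← MonoidAlgebra.one_def, one_mul] using
      single_one_mul_aeval_prod_X_sub_C_eq_zero idem lrb c lam hlam hdist 1 _
        fun r _ => Finset.mem_image_of_mem lam (Finset.mem_univ r)
  have hint : IsIntegral k w := ⟨_, monic_prod_of_monic _ _ fun v _ => monic_X_sub_C v, hroot⟩
  obtain ⟨T, hT⟩ := exists_eq_prod_X_sub_C_of_dvd (minpoly.monic hint) (minpoly.dvd k w hroot)
  refine ⟨?_, ?_, T.card, nonempty_adjoin_singleton_algEquiv_pi hT⟩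
  · rw [hT]
    exact Splits.prod fun v _ => Splits.X_sub_C v
  · rw [hT, roots_prod_X_sub_C]
    exact T.nodup
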